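/- Let X = Y_1×⋯×Y_k be a product of finite sets, let f, g : X → {−1,1}, let μ be a probability distribution on X with Corr_μ(f,g) ≥ δ, and let 0 < ε ≤ 1/2 and c ≥ 0. Suppose P : X → {−1,1} is a function that is constant on each member of some partition of X into at most 2^c cylinder intersections, and Pr_{x∼μ}[P(x) = f(x)] ≥ 1/2 + ε. Then δ ≤ 2^c · disc_{k,μ}(g) + (1 − 2ε); equivalently, 2^c ≥ (δ + 2ε − 1)/disc_{k,μ}(g). (This is the combinatorial core of the Generalized Discrepancy Method.) -/

import Mathlib

/-!
Write `Corr_μ(f, g) = E[g P] + E[g (f - P)]`. Splitting `E[g P]` along the partition, on each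
cylinder intersection `φ` the sign `P` is constant, so that piece is `±E[g φ]` and has absolute
value at most `disc_{k,μ}(g)`; this bounds `E[g P]` by `2^c · disc_{k,μ}(g)`. Since `f - P`
vanishes where `P = f` and has absolute value `2` elsewhere,
`E[g (f - P)] ≤ 2 Pr[P ≠ f] ≤ 1 - 2ε`.
-/

open scoped BigOperators

/-- A `k`-cylinder in the `i`-th dimension on a product `Y_1 × ⋯ × Y_k`
(modelled as a dependent product): its value does not depend on the `i`-th
coordinate. -/
def IsCylinder {k : ℕ} {Y : Fin k → Type*} (i : Fin k) (ψ : (∀ j, Y j) → Bool) : Prop :=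
  ∀ y y' : ∀ j, Y j, (∀ j, j ≠ i → y j = y' j) → ψ y = ψ y'

/-- A cylinder intersection: a pointwise product of cylinders in dimensions `1,…,k`. -/
def IsCylinderIntersection {k : ℕ} {Y : Fin k → Type*} (φ : (∀ j, Y j) → Bool) : Prop :=
  ∃ ψ : Fin k → ((∀ j, Y j) → Bool),
    (∀ i, IsCylinder i (ψ i)) ∧ ∀ y, φ y = decide (∀ i, ψ i y = true)

/-- Interpret a boolean as the real `0` or `1`. -/
noncomputable def bval (b : Bool) : ℝ := if b then 1 else 0

/-- A probability distribution on a finite set. -/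
def IsProbDist {D : Type*} [Fintype D] (μ : D → ℝ) : Prop :=
  (∀ x, 0 ≤ μ x) ∧ ∑ x, μ x = 1

/-- `disc_{k,μ}(g)`: the supremum over cylinder intersections `φ` of
`|E_{y∼μ}[g(y)φ(y)]|`. -/
noncomputable def disc {k : ℕ} {Y : Fin k → Type*} [∀ i, Fintype (Y i)]
    (μ : (∀ j, Y j) → ℝ) (g : (∀ j, Y j) → ℝ) : ℝ :=
  sSup { t | ∃ φ, IsCylinderIntersection φ ∧ t = |∑ y, μ y * g y * bval (φ y)| }

lemma bval_nonneg (b : Bool) : 0 ≤ bval b := by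
  cases b <;> simp [bval]

lemma bval_le_one (b : Bool) : bval b ≤ 1 := by
  cases b <;> simp [bval]

lemma sum_bval_eq_one_of_existsUnique {α : Type*} {C : Finset (α → Bool)} {x : α}
    (hC : ∃! φ, φ ∈ C ∧ φ x = true) : ∑ φ ∈ C, bval (φ x) = 1 := by
  obtain ⟨φ₀, ⟨hφ₀C, hφ₀x⟩, huniq⟩ := hC
  rw [Finset.sum_eq_single_of_mem φ₀ hφ₀C]
  · simp [bval, hφ₀x]
  · intro φ hφ hne
    have hφx : φ x = false := by
      by_contra h
      exact hne (huniq φ ⟨hφ, by simpa using h⟩)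
    simp [bval, hφx]

lemma abs_sum_mul_bval_le_of_const {D : Type*} [Fintype D] (w P : D → ℝ) (φ : D → Bool)
    (hP : ∀ x, |P x| ≤ 1) (hconst : ∀ x y, φ x = true → φ y = true → P x = P y) :
    |∑ y, w y * P y * bval (φ y)| ≤ |∑ y, w y * bval (φ y)| := by
  by_cases hφ : ∃ x₀, φ x₀ = true
  · obtain ⟨x₀, hx₀⟩ := hφ
    have hfactor : ∀ y, w y * P y * bval (φ y) = P x₀ * (w y * bval (φ y)) := by
      intro y
      by_cases hy : φ y = true
      · rw [hconst y x₀ hy hx₀]; ring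
      · simp [bval, hy]
    rw [Finset.sum_congr rfl fun y _ => hfactor y, ← Finset.mul_sum, abs_mul]
    exact mul_le_of_le_one_left (abs_nonneg _) (hP x₀)
  · push Not at hφ
    simp [bval, hφ]

section Discrepancy

variable {k : ℕ} {Y : Fin k → Type*} [∀ i, Fintype (Y i)]

lemma disc_nonneg (μ g : (∀ j, Y j) → ℝ) : 0 ≤ disc μ g :=
  Real.sSup_nonneg fun _ ⟨_, _, ht⟩ => ht ▸ abs_nonneg _

lemma abs_sum_mul_bval_le_disc (μ g : (∀ j, Y j) → ℝ) {φ : (∀ j, Y j) → Bool}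
    (hφ : IsCylinderIntersection φ) : |∑ y, μ y * g y * bval (φ y)| ≤ disc μ g := by
  refine le_csSup ⟨∑ y, |μ y * g y|, ?_⟩ ⟨φ, hφ, rfl⟩
  rintro _ ⟨ψ, -, rfl⟩
  refine (Finset.abs_sum_le_sum_abs _ _).trans (Finset.sum_le_sum fun y _ => ?_)
  rw [abs_mul, abs_of_nonneg (bval_nonneg _)]
  exact mul_le_of_le_one_right (abs_nonneg _) (bval_le_one _)

lemma sum_mul_le_card_mul_disc (μ g P : (∀ j, Y j) → ℝ) (C : Finset ((∀ j, Y j) → Bool))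
    (hCcyl : ∀ φ ∈ C, IsCylinderIntersection φ)
    (hCpart : ∀ x, ∃! φ, φ ∈ C ∧ φ x = true) (hP : ∀ x, |P x| ≤ 1)
    (hPconst : ∀ φ ∈ C, ∀ x y, φ x = true → φ y = true → P x = P y) :
    ∑ x, μ x * g x * P x ≤ C.card * disc μ g := by
  have hsplit : ∑ x, μ x * g x * P x = ∑ φ ∈ C, ∑ x, μ x * g x * P x * bval (φ x) := by
    rw [Finset.sum_comm]
    refine Finset.sum_congr rfl fun x _ => ?_
    rw [← Finset.mul_sum, sum_bval_eq_one_of_existsUnique (hCpart x), mul_one]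
  calc ∑ x, μ x * g x * P x = ∑ φ ∈ C, ∑ x, μ x * g x * P x * bval (φ x) := hsplit
    _ ≤ ∑ _φ ∈ C, disc μ g := Finset.sum_le_sum fun φ hφ =>
        (le_abs_self _).trans <| (abs_sum_mul_bval_le_of_const _ P φ hP (hPconst φ hφ)).trans
          (abs_sum_mul_bval_le_disc μ g (hCcyl φ hφ))
    _ = C.card * disc μ g := by rw [Finset.sum_const, nsmul_eq_mul]

end Discrepancy

lemma mul_sub_le_two_sub_two_mul_ite {f g p : ℝ} (hf : f = 1 ∨ f = -1) (hp : p = 1 ∨ p = -1)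
    (hg : |g| ≤ 1) : g * (f - p) ≤ 2 - 2 * (if p = f then 1 else 0) := by
  by_cases hpf : p = f
  · simp [hpf]
  · have hdiff : |f - p| = 2 := by
      rcases hf with rfl | rfl <;> rcases hp with rfl | rfl <;>
        first | exact absurd rfl hpf | norm_num
    calc g * (f - p) ≤ |g| * |f - p| := (le_abs_self _).trans (abs_mul _ _).le
      _ ≤ 1 * 2 := by rw [hdiff]; gcongr
      _ = 2 - 2 * (if p = f then 1 else 0) := by simp [hpf]

lemma sum_mul_sub_le_two_sub_two_mul_prob {D : Type*} [Fintype D] {μ f g P : D → ℝ}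
    (hμ : IsProbDist μ) (hf : ∀ x, f x = 1 ∨ f x = -1) (hP : ∀ x, P x = 1 ∨ P x = -1)
    (hg : ∀ x, |g x| ≤ 1) :
    ∑ x, μ x * g x * (f x - P x) ≤ 2 - 2 * ∑ x, μ x * (if P x = f x then 1 else 0) := by
  obtain ⟨hμ0, hμ1⟩ := hμ
  calc ∑ x, μ x * g x * (f x - P x)
      ≤ ∑ x, μ x * (2 - 2 * (if P x = f x then 1 else 0)) :=
        Finset.sum_le_sum fun x _ => by
          rw [mul_assoc]
          exact mul_le_mul_of_nonneg_left (mul_sub_le_two_sub_two_mul_ite (hf x) (hP x) (hg x))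
            (hμ0 x)
    _ = 2 * ∑ x, μ x - 2 * ∑ x, μ x * (if P x = f x then 1 else 0) := by
        rw [Finset.mul_sum, Finset.mul_sum, ← Finset.sum_sub_distrib]
        exact Finset.sum_congr rfl fun x _ => by ring
    _ = 2 - 2 * ∑ x, μ x * (if P x = f x then 1 else 0) := by rw [hμ1, mul_one]

theorem statement1_general (k : ℕ) (Y : Fin k → Type) [∀ i, Fintype (Y i)]
    (f g : (∀ j, Y j) → ℝ)
    (hf : ∀ x, f x = 1 ∨ f x = -1) (hg : ∀ x, g x = 1 ∨ g x = -1)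
    (μ : (∀ j, Y j) → ℝ) (hμ : IsProbDist μ)
    (δ : ℝ) (hcorr : δ ≤ ∑ x, μ x * f x * g x)
    (ε c : ℝ)
    (C : Finset ((∀ j, Y j) → Bool))
    (hCcyl : ∀ φ ∈ C, IsCylinderIntersection φ)
    (hCpart : ∀ x, ∃! φ, φ ∈ C ∧ φ x = true)
    (hCcard : (C.card : ℝ) ≤ (2 : ℝ) ^ c)
    (P : (∀ j, Y j) → ℝ) (hP : ∀ x, P x = 1 ∨ P x = -1)
    (hPconst : ∀ φ ∈ C, ∀ x y, φ x = true → φ y = true → P x = P y)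
    (hPcorrect : (1 : ℝ) / 2 + ε ≤ ∑ x, μ x * (if P x = f x then 1 else 0)) :
    δ ≤ (2 : ℝ) ^ c * disc μ g + (1 - 2 * ε) := by
  have habs : ∀ (h : (∀ j, Y j) → ℝ), (∀ x, h x = 1 ∨ h x = -1) → ∀ x, |h x| ≤ 1 :=
    fun h hh x => by rcases hh x with hx | hx <;> simp [hx]
  have hagree := sum_mul_le_card_mul_disc μ g P C hCcyl hCpart (habs P hP) hPconst
  have herror := sum_mul_sub_le_two_sub_two_mul_prob hμ hf hP (habs g hg)
  have hcard := mul_le_mul_of_nonneg_right hCcard (disc_nonneg μ g)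
  calc δ ≤ ∑ x, μ x * f x * g x := hcorr
    _ = ∑ x, μ x * g x * P x + ∑ x, μ x * g x * (f x - P x) := by
        rw [← Finset.sum_add_distrib]
        exact Finset.sum_congr rfl fun x _ => by ring
    _ ≤ (2 : ℝ) ^ c * disc μ g + (1 - 2 * ε) := by linarith

/-- The combinatorial core of the Generalized Discrepancy Method.
If `Corr_μ(f,g) ≥ δ`, and `P` is a `{-1,1}`-valued function constant on each member
of a partition of the input space into at most `2^c` cylinder intersections, that
agrees with `f` with probability at least `1/2 + ε` under `μ`, then
`δ ≤ 2^c · disc_{k,μ}(g) + (1 − 2ε)`. -/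
theorem statement1 (k : ℕ) (hk : 2 ≤ k) (Y : Fin k → Type) [∀ i, Fintype (Y i)]
    (f g : (∀ j, Y j) → ℝ)
    (hf : ∀ x, f x = 1 ∨ f x = -1) (hg : ∀ x, g x = 1 ∨ g x = -1)
    (μ : (∀ j, Y j) → ℝ) (hμ : IsProbDist μ)
    (δ : ℝ) (hcorr : δ ≤ ∑ x, μ x * f x * g x)
    (ε c : ℝ) (hε0 : 0 < ε) (hε : ε ≤ 1 / 2) (hc : 0 ≤ c)
    (C : Finset ((∀ j, Y j) → Bool))
    (hCcyl : ∀ φ ∈ C, IsCylinderIntersection φ)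
    (hCpart : ∀ x, ∃! φ, φ ∈ C ∧ φ x = true)
    (hCcard : (C.card : ℝ) ≤ (2 : ℝ) ^ c)
    (P : (∀ j, Y j) → ℝ) (hP : ∀ x, P x = 1 ∨ P x = -1)
    (hPconst : ∀ φ ∈ C, ∀ x y, φ x = true → φ y = true → P x = P y)
    (hPcorrect : (1 : ℝ) / 2 + ε ≤ ∑ x, μ x * (if P x = f x then 1 else 0)) :
    δ ≤ (2 : ℝ) ^ c * disc μ g + (1 - 2 * ε) :=
  statement1_general k Y f g hf hg μ hμ δ hcorr ε c C hCcyl hCpart hCcard P hP hPconst hPcorrect
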